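/- arXiv:2503.11868 — 2 statements merged into one kernel-verified Lean document; each statement's English description precedes it below -/
import Mathlib

section
/- Let P be a probability measure on a measurable space X, let k : X × X → ℝ be a symmetric, measurable, bounded kernel, and let x₁, …, xₙ ∈ X be points whose kernel matrix K = (k(x_i,x_j)) is positive definite. Define the cost function c(ξ, ξ') = k(ξ,ξ') − k(ξ,x)ᵀ K⁻¹ k(ξ',x) + (1/(𝟙ᵀ K⁻¹ 𝟙)) (1 − 𝟙ᵀ K⁻¹ k(ξ,x)) (1 − 𝟙ᵀ K⁻¹ k(ξ',x)), where k(ξ,x) = (k(ξ,x₁), …, k(ξ,xₙ)) ∈ ℝⁿ and 𝟙 is the all-ones vector. Then ∬_{X×X} c(ξ, ξ') d(P ⊗ P)(ξ, ξ') = ∬_{X×X} k(ξ,ξ') dP(ξ) dP(ξ') − mᵀ K⁻¹ m + (𝟙ᵀ K⁻¹ m − 1)²/(𝟙ᵀ K⁻¹ 𝟙), where m ∈ ℝⁿ has entries m_i = ∫_X k(x_i,ξ) dP(ξ). -/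
open MeasureTheory Matrix

/-! Apart from `k` itself, every term of the cost `c ξ ξ'` is a finite sum of products
`f ξ * g ξ'`, so by Fubini its `P ⊗ P`-expectation is the corresponding sum of products of
`P`-expectations; by symmetry of `k`, the `P`-expectation of `kv` is `m`. -/

section IntegralDotProduct

variable {α β ι κ : Type*} [MeasurableSpace α] [MeasurableSpace β] [Fintype ι]
  {μ : Measure α} {ν : Measure β}

theorem integrable_dotProduct (v : ι → ℝ) {g : α → ι → ℝ}
    (hg : ∀ i, Integrable (fun a => g a i) μ) : Integrable (fun a => v ⬝ᵥ g a) μ :=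
  integrable_finsetSum _ fun i _ => (hg i).const_mul (v i)

theorem integral_dotProduct (v : ι → ℝ) {g : α → ι → ℝ}
    (hg : ∀ i, Integrable (fun a => g a i) μ) :
    ∫ a, v ⬝ᵥ g a ∂μ = v ⬝ᵥ fun i => ∫ a, g a i ∂μ := by
  simp only [dotProduct]
  rw [integral_finsetSum _ fun i _ => (hg i).const_mul (v i)]
  simp_rw [integral_const_mul]

theorem integrable_mulVec_apply (A : Matrix κ ι ℝ) {g : α → ι → ℝ}
    (hg : ∀ i, Integrable (fun a => g a i) μ) (i : κ) :
    Integrable (fun a => (A *ᵥ g a) i) μ :=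
  integrable_dotProduct (A i) hg

theorem integral_mulVec_apply (A : Matrix κ ι ℝ) {g : α → ι → ℝ}
    (hg : ∀ i, Integrable (fun a => g a i) μ) :
    (fun i => ∫ a, (A *ᵥ g a) i ∂μ) = A *ᵥ fun i => ∫ a, g a i ∂μ :=
  funext fun i => integral_dotProduct (A i) hg

theorem integrable_dotProduct_prod {f : α → ι → ℝ} {g : β → ι → ℝ}
    (hf : ∀ i, Integrable (fun a => f a i) μ) (hg : ∀ i, Integrable (fun b => g b i) ν) :
    Integrable (fun z : α × β => f z.1 ⬝ᵥ g z.2) (μ.prod ν) :=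
  integrable_finsetSum _ fun i _ => (hf i).mul_prod (hg i)

theorem integral_dotProduct_prod [SFinite μ] [SFinite ν] {f : α → ι → ℝ} {g : β → ι → ℝ}
    (hf : ∀ i, Integrable (fun a => f a i) μ) (hg : ∀ i, Integrable (fun b => g b i) ν) :
    ∫ z, f z.1 ⬝ᵥ g z.2 ∂(μ.prod ν)
      = (fun i => ∫ a, f a i ∂μ) ⬝ᵥ fun i => ∫ b, g b i ∂ν := by
  simp only [dotProduct]
  rw [integral_finsetSum _ fun i _ => (hf i).mul_prod (hg i)]
  exact Finset.sum_congr rfl fun i _ => integral_prod_mul (fun a => f a i) (fun b => g b i)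

end IntegralDotProduct

theorem integrable_apply_right_of_bound {α β : Type*} [MeasurableSpace α] [MeasurableSpace β]
    {μ : Measure α} [IsFiniteMeasure μ] {k : α → β → ℝ}
    (hmeas : Measurable fun p : α × β => k p.1 p.2) {C : ℝ} (hC : ∀ a b, |k a b| ≤ C) (b : β) :
    Integrable (fun a => k a b) μ :=
  .of_bound (hmeas.comp (measurable_id.prodMk measurable_const)).aestronglyMeasurable C
    (ae_of_all _ fun a => hC a b)

theorem stmt8_general
    {X : Type*} [MeasurableSpace X] (k : X → X → ℝ)
    (hsymm : ∀ a b, k a b = k b a)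
    (hmeas : Measurable fun p : X × X => k p.1 p.2)
    (hbdd : ∃ C : ℝ, ∀ a b, |k a b| ≤ C)
    (P : Measure X) [IsProbabilityMeasure P]
    (n : ℕ) (x : Fin n → X)
    (K : Matrix (Fin n) (Fin n) ℝ)
    (kv : X → Fin n → ℝ) (hkv : ∀ ξ i, kv ξ i = k ξ (x i))
    (m : Fin n → ℝ) (hm : ∀ i, m i = ∫ ξ, k (x i) ξ ∂P)
    (c : X → X → ℝ)
    (hc : ∀ ξ ξ', c ξ ξ' = k ξ ξ' - kv ξ ⬝ᵥ (K⁻¹ *ᵥ kv ξ')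
        + ((1 : Fin n → ℝ) ⬝ᵥ (K⁻¹ *ᵥ (1 : Fin n → ℝ)))⁻¹
          * (1 - (1 : Fin n → ℝ) ⬝ᵥ (K⁻¹ *ᵥ kv ξ))
          * (1 - (1 : Fin n → ℝ) ⬝ᵥ (K⁻¹ *ᵥ kv ξ'))) :
    ∫ z, c z.1 z.2 ∂(P.prod P)
      = (∫ ξ, ∫ ξ', k ξ ξ' ∂P ∂P) - m ⬝ᵥ (K⁻¹ *ᵥ m)
        + ((1 : Fin n → ℝ) ⬝ᵥ (K⁻¹ *ᵥ m) - 1) ^ 2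
          / ((1 : Fin n → ℝ) ⬝ᵥ (K⁻¹ *ᵥ (1 : Fin n → ℝ))) := by
  obtain ⟨C, hC⟩ := hbdd
  have hk_int : Integrable (fun z : X × X => k z.1 z.2) (P.prod P) :=
    .of_bound hmeas.aestronglyMeasurable C (ae_of_all _ fun z => hC z.1 z.2)
  have hkv_int (i : Fin n) : Integrable (fun ξ => kv ξ i) P := by
    simpa only [hkv] using integrable_apply_right_of_bound hmeas hC (x i)
  have hkv_mean : (fun i => ∫ ξ, kv ξ i ∂P) = m := funext fun i => by simp only [hkv, hm, hsymm]
  have hKkv_int := integrable_mulVec_apply K⁻¹ hkv_int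
  have hquad_int := integrable_dotProduct_prod hkv_int hKkv_int
  have hquad_mean : ∫ z, kv z.1 ⬝ᵥ (K⁻¹ *ᵥ kv z.2) ∂(P.prod P) = m ⬝ᵥ (K⁻¹ *ᵥ m) := by
    rw [integral_dotProduct_prod hkv_int hKkv_int, integral_mulVec_apply K⁻¹ hkv_int, hkv_mean]
  set u : X → ℝ := fun ξ => 1 - (1 : Fin n → ℝ) ⬝ᵥ (K⁻¹ *ᵥ kv ξ)
  have hu_int : Integrable u P := (integrable_const 1).sub (integrable_dotProduct 1 hKkv_int)
  have hu_mean : ∫ ξ, u ξ ∂P = 1 - (1 : Fin n → ℝ) ⬝ᵥ (K⁻¹ *ᵥ m) := by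
    rw [integral_sub (integrable_const 1) (integrable_dotProduct 1 hKkv_int),
      integral_dotProduct 1 hKkv_int, integral_mulVec_apply K⁻¹ hkv_int, hkv_mean]
    simp
  have hc_split : (fun z : X × X => c z.1 z.2) = fun z => k z.1 z.2 - kv z.1 ⬝ᵥ (K⁻¹ *ᵥ kv z.2)
      + ((1 : Fin n → ℝ) ⬝ᵥ (K⁻¹ *ᵥ (1 : Fin n → ℝ)))⁻¹ * (u z.1 * u z.2) :=
    funext fun z => by rw [hc]; ring
  rw [hc_split, integral_add ?diff_int ((hu_int.mul_prod hu_int).const_mul _),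
    integral_sub hk_int hquad_int, integral_const_mul, integral_prod_mul, integral_prod _ hk_int,
    hquad_mean, hu_mean]
  case diff_int => exact hk_int.sub hquad_int
  ring

/-- The expectation under `P ⊗ P` of the cost function
`c(ξ,ξ') = k(ξ,ξ') − k(ξ,x)ᵀK⁻¹k(ξ',x)
  + (1/(𝟙ᵀK⁻¹𝟙))(1 − 𝟙ᵀK⁻¹k(ξ,x))(1 − 𝟙ᵀK⁻¹k(ξ',x))`
equals `∬ k dP dP − mᵀK⁻¹m + (𝟙ᵀK⁻¹m − 1)²/(𝟙ᵀK⁻¹𝟙)`. -/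
theorem stmt8
    {X : Type*} [MeasurableSpace X] (k : X → X → ℝ)
    (hsymm : ∀ a b, k a b = k b a)
    (hmeas : Measurable fun p : X × X => k p.1 p.2)
    (hbdd : ∃ C : ℝ, ∀ a b, |k a b| ≤ C)
    (P : Measure X) [IsProbabilityMeasure P]
    (n : ℕ) (x : Fin n → X)
    (K : Matrix (Fin n) (Fin n) ℝ)
    (hKdef : ∀ i j, K i j = k (x i) (x j))
    (hK : K.PosDef)
    (kv : X → Fin n → ℝ) (hkv : ∀ ξ i, kv ξ i = k ξ (x i))
    (m : Fin n → ℝ) (hm : ∀ i, m i = ∫ ξ, k (x i) ξ ∂P)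
    (c : X → X → ℝ)
    (hc : ∀ ξ ξ', c ξ ξ' = k ξ ξ' - kv ξ ⬝ᵥ (K⁻¹ *ᵥ kv ξ')
        + ((1 : Fin n → ℝ) ⬝ᵥ (K⁻¹ *ᵥ (1 : Fin n → ℝ)))⁻¹
          * (1 - (1 : Fin n → ℝ) ⬝ᵥ (K⁻¹ *ᵥ kv ξ))
          * (1 - (1 : Fin n → ℝ) ⬝ᵥ (K⁻¹ *ᵥ kv ξ'))) :
    ∫ z, c z.1 z.2 ∂(P.prod P)
      = (∫ ξ, ∫ ξ', k ξ ξ' ∂P ∂P) - m ⬝ᵥ (K⁻¹ *ᵥ m)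
        + ((1 : Fin n → ℝ) ⬝ᵥ (K⁻¹ *ᵥ m) - 1) ^ 2
          / ((1 : Fin n → ℝ) ⬝ᵥ (K⁻¹ *ᵥ (1 : Fin n → ℝ))) :=
  stmt8_general k hsymm hmeas hbdd P n x K kv hkv m hm c hc
end

section
/- Let K be a real symmetric positive definite n×n matrix, m ∈ ℝⁿ, and 𝟙 ∈ ℝⁿ the all-ones vector, and set p = (K⁻¹ − (K⁻¹ 𝟙 𝟙ᵀ K⁻¹)/(𝟙ᵀ K⁻¹ 𝟙)) m + (K⁻¹ 𝟙)/(𝟙ᵀ K⁻¹ 𝟙). Then K p + 𝟙 (pᵀ m) − 𝟙 (pᵀ K p) = m. -/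
/-!
With `u = K⁻¹ 𝟙`, `c = 𝟙ᵀ u` and `d = 𝟙ᵀ K⁻¹ m`, the vector is `p = K⁻¹ m + c⁻¹ (1 - d) u`, so
`K p = m + t 𝟙` with `t = c⁻¹ (1 - d)`, and `𝟙ᵀ p = 1` whenever `c ≠ 0`. Hence
`pᵀ K p = pᵀ m + t`, and the two multiples of `𝟙` cancel against `t 𝟙`. When `c = 0` the
junk value `0⁻¹ = 0` makes `t = 0`, and the identity holds trivially.
-/

open Matrix

variable {ι 𝕜 : Type*} [Fintype ι]

section CommRing

variable [CommRing 𝕜]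

theorem mulVec_add_dotProduct_smul_one_sub_eq {K : Matrix ι ι 𝕜} {m p : ι → 𝕜} {t : 𝕜}
    (hKp : K *ᵥ p = m + t • 1) (ht : t * (1 ⬝ᵥ p) = t) :
    K *ᵥ p + (p ⬝ᵥ m) • 1 - (p ⬝ᵥ (K *ᵥ p)) • 1 = m := by
  have hpKp : p ⬝ᵥ (K *ᵥ p) = p ⬝ᵥ m + t := by
    rw [hKp, dotProduct_add, dotProduct_smul, smul_eq_mul, dotProduct_comm p 1, ht]
  rw [hpKp, hKp]
  module

end CommRing

variable [DecidableEq ι] [Field 𝕜]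

noncomputable def optimalWeights (K : Matrix ι ι 𝕜) (m : ι → 𝕜) : ι → 𝕜 :=
  (K⁻¹ - ((1 : ι → 𝕜) ⬝ᵥ (K⁻¹ *ᵥ (1 : ι → 𝕜)))⁻¹ •
      vecMulVec (K⁻¹ *ᵥ (1 : ι → 𝕜)) ((1 : ι → 𝕜) ᵥ* K⁻¹)) *ᵥ m
    + ((1 : ι → 𝕜) ⬝ᵥ (K⁻¹ *ᵥ (1 : ι → 𝕜)))⁻¹ • (K⁻¹ *ᵥ (1 : ι → 𝕜))

theorem optimalWeights_eq (K : Matrix ι ι 𝕜) (m : ι → 𝕜) :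
    optimalWeights K m = K⁻¹ *ᵥ m +
      ((1 ⬝ᵥ (K⁻¹ *ᵥ 1))⁻¹ * (1 - (1 ᵥ* K⁻¹) ⬝ᵥ m)) • (K⁻¹ *ᵥ 1) := by
  rw [optimalWeights, sub_mulVec, smul_mulVec, vecMulVec_mulVec, op_smul_eq_smul]
  module

theorem mulVec_optimalWeights {K : Matrix ι ι 𝕜} (hK : IsUnit K.det) (m : ι → 𝕜) :
    K *ᵥ optimalWeights K m =
      m + ((1 ⬝ᵥ (K⁻¹ *ᵥ 1))⁻¹ * (1 - (1 ᵥ* K⁻¹) ⬝ᵥ m)) • 1 := by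
  rw [optimalWeights_eq, mulVec_add, mulVec_smul, mulVec_mulVec, mulVec_mulVec,
    mul_nonsing_inv _ hK, one_mulVec, one_mulVec]

theorem inv_mul_one_dotProduct_optimalWeights (K : Matrix ι ι 𝕜) (m : ι → 𝕜) :
    (1 ⬝ᵥ (K⁻¹ *ᵥ 1))⁻¹ * (1 ⬝ᵥ optimalWeights K m) = (1 ⬝ᵥ (K⁻¹ *ᵥ 1))⁻¹ := by
  set c := (1 : ι → 𝕜) ⬝ᵥ (K⁻¹ *ᵥ 1)
  have hc : c⁻¹ * c * c⁻¹ = c⁻¹ := by simpa using mul_inv_mul_cancel c⁻¹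
  rw [optimalWeights_eq, dotProduct_add, dotProduct_smul, dotProduct_mulVec, smul_eq_mul]
  linear_combination (1 - (1 ᵥ* K⁻¹) ⬝ᵥ m) * hc

/-- For a real symmetric positive definite `K` and
`p = (K⁻¹ − (K⁻¹𝟙𝟙ᵀK⁻¹)/(𝟙ᵀK⁻¹𝟙)) m + (K⁻¹𝟙)/(𝟙ᵀK⁻¹𝟙)`, one has
`K p + 𝟙 (pᵀ m) − 𝟙 (pᵀ K p) = m`. -/
theorem stmt16
    (n : ℕ) (K : Matrix (Fin n) (Fin n) ℝ) (hK : K.PosDef)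
    (m : Fin n → ℝ)
    (p : Fin n → ℝ)
    (hp : p =
      (K⁻¹ - ((1 : Fin n → ℝ) ⬝ᵥ (K⁻¹ *ᵥ (1 : Fin n → ℝ)))⁻¹ •
          vecMulVec (K⁻¹ *ᵥ (1 : Fin n → ℝ)) ((1 : Fin n → ℝ) ᵥ* K⁻¹)) *ᵥ m
        + ((1 : Fin n → ℝ) ⬝ᵥ (K⁻¹ *ᵥ (1 : Fin n → ℝ)))⁻¹ • (K⁻¹ *ᵥ (1 : Fin n → ℝ))) :
    K *ᵥ p + (p ⬝ᵥ m) • (1 : Fin n → ℝ) - (p ⬝ᵥ (K *ᵥ p)) • (1 : Fin n → ℝ) = m := by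
  change p = optimalWeights K m at hp
  subst hp
  have hdet : IsUnit K.det := isUnit_iff_ne_zero.mpr hK.det_pos.ne'
  refine mulVec_add_dotProduct_smul_one_sub_eq (mulVec_optimalWeights hdet m) ?_
  rw [mul_comm _ (1 - _), mul_assoc, inv_mul_one_dotProduct_optimalWeights]
end
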